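/- The Taylor coefficients of A_1(z) = (2z³ + 45)(4z⁶ − 252z³ − 405)/(25·(2z³ − 9)³) at z = 0 are supported on powers z^{3k}, the constant term equals 1, and for k ≥ 1 the coefficient of z^{3k} equals (6/25)·(3k+2)²·(2/9)^k. -/
import Mathlib


/-- The Taylor coefficients of `A₁(z)` at powers `z^{3k}`: the leading coefficients
`p_{3k,0}` of the polynomials `c_{3k}(c_1)`. -/
noncomputable def p3k0 (k : ℕ) : ℝ :=
  if k = 0 then 1 else 6 / 25 * (3 * (k : ℝ) + 2) ^ 2 * (2 / 9) ^ k

lemma choose_two_cast (n : ℕ) : (((n + 2).choose 2 : ℕ) : ℝ) = ((n : ℝ) + 1) * ((n : ℝ) + 2) / 2 := by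
  rw [Nat.choose_two_right, show n + 2 - 1 = n + 1 from rfl]
  have he : 2 ∣ (n + 2) * (n + 1) := by
    have := (Nat.even_mul_succ_self (n + 1)).two_dvd
    simpa [Nat.mul_comm] using this
  rw [Nat.cast_div he (by norm_num)]
  push_cast
  ring

theorem A1_taylor_expansion :
    (∀ z : ℝ, 2 * |z| ^ 3 < 9 →
        (2 * z ^ 3 + 45) * (4 * z ^ 6 - 252 * z ^ 3 - 405) / (25 * (2 * z ^ 3 - 9) ^ 3) =
          ∑' k : ℕ, p3k0 k * z ^ (3 * k)) ∧
      p3k0 0 = 1 ∧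
        ∀ k : ℕ, 1 ≤ k → p3k0 k = 6 / 25 * (3 * (k : ℝ) + 2) ^ 2 * (2 / 9) ^ k := by
  refine ⟨?_, rfl, fun k hk => if_neg (by omega)⟩
  intro z hz
  have hz3 : 2 * z ^ 3 < 9 := by
    have : z ^ 3 ≤ |z| ^ 3 := by
      calc z ^ 3 ≤ |z ^ 3| := le_abs_self _
      _ = |z| ^ 3 := abs_pow z 3
    linarith
  have hz3' : -9 < 2 * z ^ 3 := by
    have : -(z ^ 3) ≤ |z| ^ 3 := by
      calc -(z ^ 3) ≤ |z ^ 3| := neg_le_abs _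
      _ = |z| ^ 3 := abs_pow z 3
    nlinarith [abs_nonneg z]
  set x : ℝ := 2 / 9 * z ^ 3 with hxdef
  have hx : ‖x‖ < 1 := by
    rw [Real.norm_eq_abs, hxdef, abs_mul, abs_pow]
    have h29 : |(2 : ℝ) / 9| = 2 / 9 := by norm_num
    rw [h29]
    nlinarith [abs_nonneg z]
  have h1x : (1 : ℝ) - x ≠ 0 := by
    have : |x| < 1 := hx
    have := abs_lt.mp this
    intro h
    have : x = 1 := by linarith
    linarith [this ▸ this.le]
  have hd : (2 * z ^ 3 - 9 : ℝ) ≠ 0 := by intro h; nlinarith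
  -- geometric series pieces
  have h0 : HasSum (fun n : ℕ => x ^ n) (1 / (1 - x)) := by
    simpa [one_div] using hasSum_geometric_of_norm_lt_one hx
  have h1 : HasSum (fun n : ℕ => ((n + 1).choose 1 : ℝ) * x ^ n) (1 / (1 - x) ^ 2) :=
    hasSum_choose_mul_geometric_of_norm_lt_one 1 hx
  have h2 : HasSum (fun n : ℕ => ((n + 2).choose 2 : ℝ) * x ^ n) (1 / (1 - x) ^ 3) :=
    hasSum_choose_mul_geometric_of_norm_lt_one 2 hx
  have H : HasSum
      (fun n : ℕ => 6 / 25 * ((18 * (((n + 2).choose 2 : ℝ) * x ^ n)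
        - 15 * (((n + 1).choose 1 : ℝ) * x ^ n)) + x ^ n))
      (6 / 25 * ((18 * (1 / (1 - x) ^ 3) - 15 * (1 / (1 - x) ^ 2)) + 1 / (1 - x))) :=
    (((h2.mul_left 18).sub (h1.mul_left 15)).add h0).mul_left (6 / 25)
  have Hδ : HasSum (fun n : ℕ => if n = 0 then (1 / 25 : ℝ) else 0) (1 / 25) :=
    hasSum_ite_eq 0 (1 / 25)
  have Htot := H.add Hδ
  have Hfun : (fun n : ℕ => p3k0 n * z ^ (3 * n)) =
      fun n : ℕ => (6 / 25 * ((18 * (((n + 2).choose 2 : ℝ) * x ^ n)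
        - 15 * (((n + 1).choose 1 : ℝ) * x ^ n)) + x ^ n))
        + (if n = 0 then (1 / 25 : ℝ) else 0) := by
    funext n
    have hxe : x ^ n = (2 / 9 : ℝ) ^ n * z ^ (3 * n) := by
      rw [hxdef, mul_pow, pow_mul]
    rw [choose_two_cast, Nat.choose_one_right]
    rcases Nat.eq_zero_or_pos n with hn | hn
    · subst hn; simp [p3k0]; norm_num
    · rw [if_neg (show ¬ n = 0 by omega)]
      simp only [p3k0, if_neg (Nat.pos_iff_ne_zero.mp hn)]
      rw [hxe]
      push_cast
      ring
  have Hts : ∑' k : ℕ, p3k0 k * z ^ (3 * k) =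
      6 / 25 * ((18 * (1 / (1 - x) ^ 3) - 15 * (1 / (1 - x) ^ 2)) + 1 / (1 - x)) + 1 / 25 := by
    rw [tsum_congr (fun n => congrFun Hfun n)]
    exact Htot.tsum_eq
  rw [Hts]
  have hd' : (9 - 2 * z ^ 3 : ℝ) ≠ 0 := by intro h; apply hd; linarith
  have h1x' : (1 : ℝ) - x = (9 - 2 * z ^ 3) / 9 := by rw [hxdef]; ring
  have e1 : 1 / (1 - x) = 9 / (9 - 2 * z ^ 3) := by rw [h1x']; field_simp
  have e2 : 1 / (1 - x) ^ 2 = 81 / (9 - 2 * z ^ 3) ^ 2 := by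
    rw [h1x', div_pow]; field_simp; ring
  have e3 : 1 / (1 - x) ^ 3 = 729 / (9 - 2 * z ^ 3) ^ 3 := by
    rw [h1x', div_pow]; field_simp; ring
  rw [e1, e2, e3]
  field_simp
  ring
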